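/- arXiv:2207.13216 — 6 statements merged into one kernel-verified Lean document; each statement's English description precedes it below -/
import Mathlib

section
/- (Continuous analogue of Lemma 3.2 of 'Stability of concordance embeddings'.) If P is compact Hausdorff, then the space CF(P,M) of continuous concordance maps of P in M is contractible; in fact CF(P,M) deformation retracts onto the one-point subspace consisting of the inclusion P×I ⊆ M×I. -/
/-!
Two homotopies are concatenated. First the level coordinate of `φ` is moved along the straight
line to `t`; since `φ` preserves the levels `0` and `1`, so does every convex combination.
The resulting map `(p, t) ↦ ((φ (p, t)).1, t)` is then pulled down through
`(p, t) ↦ ((φ (p, (1 - s) t)).1, t)`, which at `s = 1` is the inclusion because `φ` is the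
inclusion on `P × {0}`. Both are continuous in `φ` because evaluation `C(P × I, M × I) × (P × I) →
M × I` is continuous, `P` being locally compact.
-/

open Set unitInterval Topology

noncomputable section

/-- `φ : P × I → M × I` is a continuous concordance map of `P` in `M` relative to `A`. -/
def IsConcMap {M : Type} [TopologicalSpace M] (P A : Set M) (φ : ↥P × ↥I → M × ↥I) : Prop :=
  Continuous φ ∧
  (∀ x : ↥P × ↥I, ((φ x).2 = 0 ↔ x.2 = 0) ∧ ((φ x).2 = 1 ↔ x.2 = 1)) ∧
  ∃ U : Set (↥P × ↥I), IsOpen U ∧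
    ({x : ↥P × ↥I | x.2 = 0} ∪ {x : ↥P × ↥I | (x.1 : M) ∈ A}) ⊆ U ∧
    ∀ x ∈ U, φ x = ((x.1 : M), x.2)

namespace Set.Icc

variable {a b : ℝ} {x y : Icc a b} {t : I}

theorem coe_convexComb_eq_left_iff (hxy : (x : ℝ) = a ↔ (y : ℝ) = a) :
    (convexComb x y t : ℝ) = a ↔ (y : ℝ) = a := by
  have hx := x.2.1
  have hy := y.2.1
  constructor
  · intro h
    rw [coe_convexComb] at h
    have hsum : (1 - (t : ℝ)) * (x - a) + t * (y - a) = 0 := by linear_combination h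
    obtain ⟨hxa, hya⟩ := (add_eq_zero_iff_of_nonneg
      (mul_nonneg (unitInterval.one_minus_nonneg t) (sub_nonneg.2 hx))
      (mul_nonneg t.2.1 (sub_nonneg.2 hy))).1 hsum
    rcases mul_eq_zero.1 hya with ht | hya
    · rw [ht, sub_zero, one_mul, sub_eq_zero] at hxa
      exact hxy.1 hxa
    · exact sub_eq_zero.1 hya
  · intro h
    rw [coe_convexComb, h, hxy.2 h]
    ring

theorem coe_convexComb_eq_right_iff (hxy : (x : ℝ) = b ↔ (y : ℝ) = b) :
    (convexComb x y t : ℝ) = b ↔ (y : ℝ) = b := by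
  have hx := x.2.2
  have hy := y.2.2
  constructor
  · intro h
    rw [coe_convexComb] at h
    have hsum : (1 - (t : ℝ)) * (b - x) + t * (b - y) = 0 := by linear_combination -h
    obtain ⟨hxb, hyb⟩ := (add_eq_zero_iff_of_nonneg
      (mul_nonneg (unitInterval.one_minus_nonneg t) (sub_nonneg.2 hx))
      (mul_nonneg t.2.1 (sub_nonneg.2 hy))).1 hsum
    rcases mul_eq_zero.1 hyb with ht | hyb
    · rw [ht, sub_zero, one_mul, sub_eq_zero] at hxb
      exact hxy.1 hxb.symm
    · exact (sub_eq_zero.1 hyb).symm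
  · intro h
    rw [coe_convexComb, h, hxy.2 h]
    ring

end Set.Icc

namespace ContinuousMap

variable {X Y : Type*} [TopologicalSpace X] [TopologicalSpace Y]

def straightenLevel (φ : C(X × I, Y × I)) (s : I) : C(X × I, Y × I) :=
  ⟨fun x ↦ ((φ x).1, Icc.convexComb (φ x).2 x.2 s), by fun_prop⟩

def pullDown (φ : C(X × I, Y × I)) (s : I) : C(X × I, Y × I) :=
  ⟨fun x ↦ ((φ (x.1, σ s * x.2)).1, x.2), by fun_prop⟩

theorem straightenLevel_zero (φ : C(X × I, Y × I)) : straightenLevel φ 0 = φ := by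
  ext x <;> simp [straightenLevel]

theorem pullDown_zero (φ : C(X × I, Y × I)) : pullDown φ 0 = straightenLevel φ 1 := by
  ext x <;> simp [straightenLevel, pullDown]

variable [LocallyCompactSpace X]

theorem continuous_straightenLevel :
    Continuous fun p : C(X × I, Y × I) × I ↦ straightenLevel p.1 p.2 := by
  apply continuous_of_continuous_uncurry
  simp only [straightenLevel, coe_mk]
  fun_prop

theorem continuous_pullDown :
    Continuous fun p : C(X × I, Y × I) × I ↦ pullDown p.1 p.2 := by
  apply continuous_of_continuous_uncurry
  simp only [pullDown, coe_mk]
  fun_prop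

end ContinuousMap

section Concordance

open ContinuousMap (Homotopy)

variable {M : Type} [TopologicalSpace M] {P A : Set M}

def concInclusion (P : Set M) : C(P × I, M × I) :=
  ⟨fun x ↦ ((x.1 : M), x.2), by fun_prop⟩

theorem isConcMap_concInclusion : IsConcMap P A (concInclusion P) :=
  ⟨(concInclusion P).continuous, fun _ ↦ ⟨Iff.rfl, Iff.rfl⟩, univ, isOpen_univ, subset_univ _,
    fun _ _ ↦ rfl⟩

namespace IsConcMap

variable {φ : C(P × I, M × I)}

theorem straightenLevel (hφ : IsConcMap P A φ) (s : I) : IsConcMap P A (φ.straightenLevel s) := by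
  obtain ⟨-, hlevel, U, hU, hsub, hid⟩ := hφ
  refine ⟨(φ.straightenLevel s).continuous, fun x ↦ ?_, U, hU, hsub, fun x hx ↦ ?_⟩
  · simp only [ContinuousMap.straightenLevel, ContinuousMap.coe_mk, ← Icc.coe_eq_zero,
      ← Icc.coe_eq_one] at hlevel ⊢
    exact ⟨Icc.coe_convexComb_eq_left_iff (hlevel x).1,
      Icc.coe_convexComb_eq_right_iff (hlevel x).2⟩
  · simp [ContinuousMap.straightenLevel, hid x hx]

theorem pullDown (hφ : IsConcMap P A φ) (s : I) : IsConcMap P A (φ.pullDown s) := by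
  obtain ⟨-, -, U, hU, hsub, hid⟩ := hφ
  refine ⟨(φ.pullDown s).continuous, fun _ ↦ ⟨Iff.rfl, Iff.rfl⟩,
    (fun x : P × I ↦ (x.1, σ s * x.2)) ⁻¹' U, hU.preimage (by fun_prop), ?_, fun x hx ↦ ?_⟩
  · rintro x (hx | hx)
    · exact hsub (Or.inl (by simp [show x.2 = 0 from hx]))
    · exact hsub (Or.inr hx)
  · simp [ContinuousMap.pullDown, hid _ hx]

theorem pullDown_one (hφ : IsConcMap P A φ) : φ.pullDown 1 = concInclusion P := by
  obtain ⟨-, -, U, -, hsub, hid⟩ := hφ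
  ext x
  · simp [ContinuousMap.pullDown, concInclusion, hid (x.1, 0) (hsub (Or.inl rfl))]
  · rfl

end IsConcMap

abbrev ConcMaps (P A : Set M) := {φ : C(P × I, M × I) // IsConcMap P A φ}

namespace ConcMaps

def inclusion : ConcMaps P A := ⟨concInclusion P, isConcMap_concInclusion⟩

variable [LocallyCompactSpace P]

def straightenLevel : C(I × ConcMaps P A, ConcMaps P A) :=
  ⟨fun p ↦ ⟨p.2.1.straightenLevel p.1, p.2.2.straightenLevel p.1⟩,
    (ContinuousMap.continuous_straightenLevel.comp
      ((continuous_subtype_val.comp continuous_snd).prodMk continuous_fst)).subtype_mk _⟩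

def pullDown : C(I × ConcMaps P A, ConcMaps P A) :=
  ⟨fun p ↦ ⟨p.2.1.pullDown p.1, p.2.2.pullDown p.1⟩,
    (ContinuousMap.continuous_pullDown.comp
      ((continuous_subtype_val.comp continuous_snd).prodMk continuous_fst)).subtype_mk _⟩

def straightenLevelHomotopy :
    Homotopy (ContinuousMap.id (ConcMaps P A)) (straightenLevel.curry 1) where
  toContinuousMap := straightenLevel
  map_zero_left φ := Subtype.ext φ.1.straightenLevel_zero
  map_one_left _ := rfl

def pullDownHomotopy :
    Homotopy (straightenLevel.curry 1) (ContinuousMap.const _ (inclusion : ConcMaps P A)) where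
  toContinuousMap := pullDown
  map_zero_left φ := Subtype.ext φ.1.pullDown_zero
  map_one_left φ := Subtype.ext φ.2.pullDown_one

def contraction :
    Homotopy (ContinuousMap.id (ConcMaps P A)) (ContinuousMap.const _ inclusion) :=
  straightenLevelHomotopy.trans pullDownHomotopy

end ConcMaps

end Concordance

theorem statement0_general {M : Type} [TopologicalSpace M] (P A : Set M)
    (hPcompact : IsCompact P) (hPt2 : T2Space ↥P) :
    ContractibleSpace {φ : C(↥P × ↥I, M × ↥I) // IsConcMap P A ⇑φ} ∧
    ∃ (inc : {φ : C(↥P × ↥I, M × ↥I) // IsConcMap P A ⇑φ})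
      (H : C({φ : C(↥P × ↥I, M × ↥I) // IsConcMap P A ⇑φ} × ↥I,
             {φ : C(↥P × ↥I, M × ↥I) // IsConcMap P A ⇑φ})),
      (∀ x : ↥P × ↥I, inc.1 x = ((x.1 : M), x.2)) ∧
      (∀ φ, H (φ, 0) = φ) ∧
      (∀ φ, H (φ, 1) = inc) := by
  have : CompactSpace P := isCompact_iff_compactSpace.mp hPcompact
  let F := ConcMaps.contraction (P := P) (A := A)
  exact ⟨(contractible_iff_id_nullhomotopic _).2 ⟨_, ⟨F⟩⟩, ConcMaps.inclusion,
    F.toContinuousMap.comp .prodSwap, fun _ ↦ rfl, F.apply_zero, F.apply_one⟩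

theorem statement0 {M : Type} [TopologicalSpace M] (P A : Set M) (hAP : A ⊆ P)
    (hPcompact : IsCompact P) (hPt2 : T2Space ↥P) :
    ContractibleSpace {φ : C(↥P × ↥I, M × ↥I) // IsConcMap P A ⇑φ} ∧
    ∃ (inc : {φ : C(↥P × ↥I, M × ↥I) // IsConcMap P A ⇑φ})
      (H : C({φ : C(↥P × ↥I, M × ↥I) // IsConcMap P A ⇑φ} × ↥I,
             {φ : C(↥P × ↥I, M × ↥I) // IsConcMap P A ⇑φ})),
      (∀ x : ↥P × ↥I, inc.1 x = ((x.1 : M), x.2)) ∧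
      (∀ φ, H (φ, 0) = φ) ∧
      (∀ φ, H (φ, 1) = inc) :=
  statement0_general P A hPcompact hPt2
end
end

section
/- (Well-definedness of the stabilisation map, Section 2.2 of 'Stability of concordance embeddings'.) For every continuous concordance map e of P in M the two clauses defining σ(e) are consistent: for (s,t) ∈ D₁ the value (e_M(p,r), Λ(e_I(p,r),θ)) is independent of the choice of (r,θ) ∈ [0,1]×[0,π] with Λ(r,θ) = (s,t), and the two clauses agree for (s,t) ∈ D₁ ∩ D₂. The resulting map σ(e) : P×J×I → M×J×I is continuous, maps P×D₁ into M×D₁ and P×D₂ into M×D₂, preserves radial segments in the sense that pr_{J×I}(σ(e)(p, Λ(r,θ))) ∈ Λ([0,1]×{θ}) for all p ∈ P and (r,θ) ∈ [0,1]×[0,π], and σ(e) is itself a continuous concordance map of P×J in M×J relative to the subset (A×J) ∪ (P×{−1,1}) of P×J. -/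
/-!
On `{p} × J × I` the map `σ(e)` is the homothety centred at `(0,1)` which sends the circle of
radius `1 - r` to the circle of radius `1 - e_I(p, r)`. With `r := 1 - |z - (0,1)|` clamped to
`I`, so that `r = 0` off the disc `D₁` and `e_I(p, 0) = 0` makes the ratio `1` there, this is
a single formula on all of `J × I`, and both clauses of `σ(e)` hold for it. The ratio is a
`0/0` at the centre, but there the image stays within `1 - e_I(p, r) → 1 - e_I(p, 1) = 0` of
the centre, which gives continuity. Finally `σ(e)` is the inclusion wherever `e` is the
inclusion at `(p, r)`; this is an open set containing `t = 0`, `s = ±1` (where `r = 0`) and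
`A × J`.
-/

open Set unitInterval Topology

noncomputable section

abbrev JJ : Set ℝ := Set.Icc (-1 : ℝ) 1

/-- The polar parametrisation `Λ(r,θ) = ((1−r)cos(θ+π), (1−r)sin(θ+π) + 1)`. -/
def Lam : ℝ × ℝ → ℝ × ℝ :=
  fun p => ((1 - p.1) * Real.cos (p.2 + Real.pi), (1 - p.1) * Real.sin (p.2 + Real.pi) + 1)

def D1 : Set (ℝ × ℝ) := {z | z.1 ∈ JJ ∧ z.2 ∈ Set.Icc (0:ℝ) 1 ∧ z.1 ^ 2 + (z.2 - 1) ^ 2 ≤ 1}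
def D2 : Set (ℝ × ℝ) := {z | z.1 ∈ JJ ∧ z.2 ∈ Set.Icc (0:ℝ) 1 ∧ 1 ≤ z.1 ^ 2 + (z.2 - 1) ^ 2}

/-- `F : P × J × I → M × J × I` satisfies the two clauses defining the stabilisation `σ(e)`:
on `P × D₁` it is given (in the polar coordinates `Λ`) by
`σ(e)(p, Λ(r,θ)) = (e_M(p,r), Λ(e_I(p,r), θ))`, and on `P × D₂` it is the inclusion. -/
def IsSigmaOf {M : Type} [TopologicalSpace M] (P : Set M)
    (e : ↥P × ↥I → M × ↥I) (F : ↥P × ↥JJ × ↥I → M × ↥JJ × ↥I) : Prop :=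
  (∀ (p : ↥P) (s : ↥JJ) (t : ↥I) (r : ↥I) (θ : ℝ), θ ∈ Set.Icc 0 Real.pi →
    ((s : ℝ), (t : ℝ)) = Lam ((r : ℝ), θ) →
    (F (p, s, t)).1 = (e (p, r)).1 ∧
    (((F (p, s, t)).2.1 : ℝ), ((F (p, s, t)).2.2 : ℝ)) = Lam (((e (p, r)).2 : ℝ), θ)) ∧
  (∀ (p : ↥P) (s : ↥JJ) (t : ↥I), ((s : ℝ), (t : ℝ)) ∈ D2 → F (p, s, t) = ((p : M), s, t))

/-- `F : P × J × I → M × J × I` is a continuous concordance map of `P × J` in `M × J`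
relative to `(A × J) ∪ (P × {−1,1})`. -/
def IsConcMapJ {M : Type} [TopologicalSpace M] (P A : Set M)
    (F : ↥P × ↥JJ × ↥I → M × ↥JJ × ↥I) : Prop :=
  Continuous F ∧
  (∀ x : ↥P × ↥JJ × ↥I, ((F x).2.2 = 0 ↔ x.2.2 = 0) ∧ ((F x).2.2 = 1 ↔ x.2.2 = 1)) ∧
  ∃ U : Set (↥P × ↥JJ × ↥I), IsOpen U ∧
    ({x : ↥P × ↥JJ × ↥I | x.2.2 = 0} ∪
     {x : ↥P × ↥JJ × ↥I | (x.1 : M) ∈ A ∨ (x.2.1 : ℝ) = -1 ∨ (x.2.1 : ℝ) = 1}) ⊆ U ∧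
    ∀ x ∈ U, F x = ((x.1 : M), x.2.1, x.2.2)

namespace Stabilisation

theorem abs_div_mul_le_abs {a m c : ℝ} (hcm : |c| ≤ m) : |a / m * c| ≤ |a| := by
  rcases (abs_nonneg c |>.trans hcm).eq_or_lt with hm | hm
  · simp [← hm]
  · rw [abs_mul, abs_div, abs_of_pos hm, div_mul_eq_mul_div, div_le_iff₀ hm]
    exact mul_le_mul_of_nonneg_left hcm (abs_nonneg a)

theorem continuous_div_mul_of_abs_le {X : Type*} [TopologicalSpace X] {a m c : X → ℝ}
    (ha : Continuous a) (hm : Continuous m) (hc : Continuous c)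
    (hm₀ : ∀ x, m x = 0 → a x = 0 ∧ ∀ᶠ y in 𝓝 x, |c y| ≤ m y) :
    Continuous fun x => a x / m x * c x := by
  refine continuous_iff_continuousAt.2 fun x₀ => ?_
  by_cases hx₀ : m x₀ = 0
  · obtain ⟨ha₀, hcm⟩ := hm₀ x₀ hx₀
    have hlim : Filter.Tendsto (fun x => ‖a x‖) (𝓝 x₀) (𝓝 0) := by
      simpa [ha₀] using (ha.tendsto x₀).norm
    simp only [ContinuousAt, hx₀, div_zero, zero_mul]
    exact squeeze_zero_norm' (hcm.mono fun x => abs_div_mul_le_abs) hlim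
  · exact (ha.continuousAt.div hm.continuousAt hx₀).mul hc.continuousAt

def radius (z : ℝ × ℝ) : ℝ := √(z.1 ^ 2 + (z.2 - 1) ^ 2)

theorem radius_nonneg (z : ℝ × ℝ) : 0 ≤ radius z := Real.sqrt_nonneg _

theorem continuous_radius : Continuous radius := by
  unfold radius; fun_prop

theorem abs_fst_le_radius (z : ℝ × ℝ) : |z.1| ≤ radius z :=
  Real.abs_le_sqrt (by nlinarith [sq_nonneg (z.2 - 1)])

theorem abs_snd_sub_one_le_radius (z : ℝ × ℝ) : |z.2 - 1| ≤ radius z :=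
  Real.abs_le_sqrt (by nlinarith [sq_nonneg z.1])

theorem radius_eq_zero_iff {z : ℝ × ℝ} : radius z = 0 ↔ z = (0, 1) := by
  refine ⟨fun h => ?_, fun h => by simp [radius, h]⟩
  have h₁ := abs_fst_le_radius z
  have h₂ := abs_snd_sub_one_le_radius z
  rw [h, abs_nonpos_iff] at h₁ h₂
  exact Prod.ext h₁ (sub_eq_zero.1 h₂)

theorem min_radius_one_eq_zero_iff {z : ℝ × ℝ} : min (radius z) 1 = 0 ↔ radius z = 0 := by
  refine ⟨fun h => ?_, fun h => by rw [h, min_eq_left zero_le_one]⟩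
  rcases min_choice (radius z) 1 with h' | h' <;> rw [h'] at h
  exacts [h, absurd h one_ne_zero]

theorem radius_le_one_iff {z : ℝ × ℝ} : radius z ≤ 1 ↔ z.1 ^ 2 + (z.2 - 1) ^ 2 ≤ 1 := by
  rw [radius, Real.sqrt_le_one]

theorem one_le_radius_iff {z : ℝ × ℝ} : 1 ≤ radius z ↔ 1 ≤ z.1 ^ 2 + (z.2 - 1) ^ 2 := by
  rw [radius, Real.one_le_sqrt]

theorem radius_lam {r : ℝ} (θ : ℝ) (hr : r ≤ 1) : radius (Lam (r, θ)) = 1 - r := by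
  have hsq : ((1 - r) * Real.cos (θ + Real.pi)) ^ 2
      + ((1 - r) * Real.sin (θ + Real.pi) + 1 - 1) ^ 2 = (1 - r) ^ 2 := by
    linear_combination (1 - r) ^ 2 * Real.sin_sq_add_cos_sq (θ + Real.pi)
  rw [radius, Lam, hsq, Real.sqrt_sq (by linarith)]

/-- The coordinate `r` of `z = Λ(r, θ)`, extended by `0` outside the disc. -/
def radialCoord (z : ℝ × ℝ) : I := projIcc 0 1 zero_le_one (1 - radius z)

theorem continuous_radialCoord : Continuous radialCoord :=
  continuous_projIcc.comp (continuous_const.sub continuous_radius)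

theorem radialCoord_eq_zero_iff {z : ℝ × ℝ} : radialCoord z = 0 ↔ 1 ≤ radius z :=
  (projIcc_eq_left zero_lt_one).trans sub_nonpos

theorem radialCoord_eq_one_iff {z : ℝ × ℝ} : radialCoord z = 1 ↔ radius z = 0 :=
  ((projIcc_eq_right zero_lt_one).trans (le_sub_self_iff 1)).trans (radius_nonneg z).ge_iff_eq'

theorem coe_radialCoord {z : ℝ × ℝ} (h : radius z ≤ 1) : (radialCoord z : ℝ) = 1 - radius z := by
  rw [radialCoord, projIcc_of_mem _ ⟨by linarith, by linarith [radius_nonneg z]⟩]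

theorem radialCoord_lam (r : I) (θ : ℝ) : radialCoord (Lam (r, θ)) = r := by
  rw [radialCoord, radius_lam θ r.2.2, sub_sub_cancel, projIcc_val]

def dilate (k : ℝ) (z : ℝ × ℝ) : ℝ × ℝ := (k * z.1, k * (z.2 - 1) + 1)

theorem dilate_one (z : ℝ × ℝ) : dilate 1 z = z := by
  simp [dilate]

theorem dilate_center (k : ℝ) : dilate k (0, 1) = (0, 1) := by
  simp [dilate]

theorem dilate_lam (k r θ : ℝ) : dilate k (Lam (r, θ)) = Lam (1 - k * (1 - r), θ) := by
  simp only [dilate, Lam]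
  ext <;> ring

theorem radius_dilate {k : ℝ} (hk : 0 ≤ k) (z : ℝ × ℝ) : radius (dilate k z) = k * radius z := by
  have hsq : (dilate k z).1 ^ 2 + ((dilate k z).2 - 1) ^ 2
      = k ^ 2 * (z.1 ^ 2 + (z.2 - 1) ^ 2) := by
    simp only [dilate]; ring
  rw [radius, radius, hsq, Real.sqrt_mul' _ (by positivity), Real.sqrt_sq hk]

variable {M : Type} {P : Set M}

/-- The radius `1 - e_I(p, r)` of the circle onto which `σ(e)` maps the circle of radius
`1 - r`. -/
def newRadius (e : P × I → M × I) (p : P) (z : ℝ × ℝ) : ℝ := 1 - (e (p, radialCoord z)).2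

/-- Taking `min · 1` makes the ratio `1` outside the disc, where `newRadius = 1`. -/
def scale (e : P × I → M × I) (p : P) (z : ℝ × ℝ) : ℝ := newRadius e p z / min (radius z) 1

variable (e : P × I → M × I)

theorem newRadius_nonneg (p : P) (z : ℝ × ℝ) : 0 ≤ newRadius e p z :=
  sub_nonneg.2 (e (p, radialCoord z)).2.2.2

theorem newRadius_le_one (p : P) (z : ℝ × ℝ) : newRadius e p z ≤ 1 :=
  sub_le_self _ (e (p, radialCoord z)).2.2.1

theorem continuous_newRadius [TopologicalSpace M] (hec : Continuous e) :
    Continuous fun q : P × (ℝ × ℝ) => newRadius e q.1 q.2 := by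
  unfold newRadius
  have := continuous_radialCoord
  fun_prop

theorem scale_nonneg (p : P) (z : ℝ × ℝ) : 0 ≤ scale e p z :=
  div_nonneg (newRadius_nonneg e p z) (le_min (radius_nonneg z) zero_le_one)

theorem abs_scale_mul_le {p : P} {z : ℝ × ℝ} {c : ℝ} (hc : |c| ≤ radius z) (hc₁ : |c| ≤ 1) :
    |scale e p z * c| ≤ newRadius e p z :=
  (abs_div_mul_le_abs (le_min hc hc₁)).trans_eq (abs_of_nonneg (newRadius_nonneg e p z))

theorem dilate_scale_mem (p : P) {z : ℝ × ℝ} (hz : z ∈ JJ ×ˢ I) :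
    dilate (scale e p z) z ∈ JJ ×ˢ I := by
  have hs : |z.1| ≤ 1 := abs_le.2 hz.1
  have ht : |z.2 - 1| ≤ 1 := abs_le.2 ⟨by linarith [hz.2.1], by linarith [hz.2.2]⟩
  have hs' := (abs_scale_mul_le e (abs_fst_le_radius z) hs).trans (newRadius_le_one e p z)
  have ht' := (abs_scale_mul_le e (abs_snd_sub_one_le_radius z) ht).trans (newRadius_le_one e p z)
  have hneg : scale e p z * (z.2 - 1) ≤ 0 :=
    mul_nonpos_of_nonneg_of_nonpos (scale_nonneg e p z) (by linarith [hz.2.2])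
  refine ⟨abs_le.1 hs', ?_, ?_⟩ <;> simp only [dilate] <;> linarith [(abs_le.1 ht').1]

theorem radius_dilate_scale_le (p : P) {z : ℝ × ℝ} (hz : radius z ≤ 1) :
    radius (dilate (scale e p z) z) ≤ newRadius e p z := by
  have habs : |radius z| = radius z := abs_of_nonneg (radius_nonneg z)
  rw [radius_dilate (scale_nonneg e p z)]
  exact (le_abs_self _).trans (abs_scale_mul_le e habs.le (habs.trans_le hz))

theorem dilate_scale_of_fixed {p : P} {z : ℝ × ℝ}
    (hfix : (e (p, radialCoord z)).2 = radialCoord z) : dilate (scale e p z) z = z := by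
  have hnew : newRadius e p z = min (radius z) 1 := by
    rw [newRadius, hfix]
    rcases le_total (radius z) 1 with h | h
    · rw [coe_radialCoord h, min_eq_left h, sub_sub_cancel]
    · rw [radialCoord_eq_zero_iff.2 h, min_eq_right h, Icc.coe_zero, sub_zero]
  rcases eq_or_ne (min (radius z) 1) 0 with h | h
  · rw [radius_eq_zero_iff.1 (min_radius_one_eq_zero_iff.1 h), dilate_center]
  · rw [scale, hnew, div_self h, dilate_one]

def PreservesEnds (e : P × I → M × I) : Prop :=
  ∀ x : P × I, ((e x).2 = 0 ↔ x.2 = 0) ∧ ((e x).2 = 1 ↔ x.2 = 1)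

variable {e}

theorem newRadius_eq_one_iff (hend : PreservesEnds e) {p : P} {z : ℝ × ℝ} :
    newRadius e p z = 1 ↔ 1 ≤ radius z := by
  rw [newRadius, sub_eq_self, Icc.coe_eq_zero, (hend _).1, radialCoord_eq_zero_iff]

theorem newRadius_eq_zero_iff (hend : PreservesEnds e) {p : P} {z : ℝ × ℝ} :
    newRadius e p z = 0 ↔ radius z = 0 := by
  rw [newRadius, sub_eq_zero, eq_comm, Icc.coe_eq_one, (hend _).2, radialCoord_eq_one_iff]

theorem scale_of_one_le_radius (hend : PreservesEnds e) {p : P} {z : ℝ × ℝ}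
    (hz : 1 ≤ radius z) : scale e p z = 1 := by
  rw [scale, (newRadius_eq_one_iff hend).2 hz, min_eq_right hz, div_one]

theorem scale_mul_radius (hend : PreservesEnds e) {p : P} {z : ℝ × ℝ} (hz : radius z ≤ 1) :
    scale e p z * radius z = newRadius e p z := by
  rcases eq_or_ne (radius z) 0 with h | h
  · rw [h, mul_zero, (newRadius_eq_zero_iff hend).2 h]
  · rw [scale, min_eq_left hz, div_mul_cancel₀ _ h]

theorem dilate_scale_lam (hend : PreservesEnds e) (p : P) (r : I) (θ : ℝ) :
    dilate (scale e p (Lam (r, θ))) (Lam (r, θ)) = Lam ((e (p, r)).2, θ) := by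
  have hrad := radius_lam θ r.2.2
  rw [dilate_lam, ← hrad, scale_mul_radius hend (hrad ▸ sub_le_self _ r.2.1), newRadius,
    radialCoord_lam, sub_sub_cancel]

theorem dilate_scale_snd_eq_zero_iff (hend : PreservesEnds e) {p : P} {z : ℝ × ℝ}
    (hz : z ∈ JJ ×ˢ I) : (dilate (scale e p z) z).2 = 0 ↔ z.2 = 0 := by
  have ht : |z.2 - 1| ≤ 1 := abs_le.2 ⟨by linarith [hz.2.1], by linarith [hz.2.2]⟩
  constructor
  · intro h
    have hk : scale e p z * (z.2 - 1) = -1 := by simp only [dilate] at h; linarith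
    have hnew : 1 ≤ newRadius e p z := by
      simpa [hk] using abs_scale_mul_le e (p := p) (abs_snd_sub_one_le_radius z) ht
    have hfar := (newRadius_eq_one_iff hend).1 (le_antisymm (newRadius_le_one e p z) hnew)
    rw [scale_of_one_le_radius hend hfar] at hk
    linarith
  · intro h
    have hfar : 1 ≤ radius z := by simpa [h] using abs_snd_sub_one_le_radius z
    rw [scale_of_one_le_radius hend hfar, dilate_one, h]

theorem dilate_scale_snd_eq_one_iff (hend : PreservesEnds e) {p : P} {z : ℝ × ℝ} :
    (dilate (scale e p z) z).2 = 1 ↔ z.2 = 1 := by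
  refine ⟨fun h => by_contra fun hz => ?_, fun h => by simp [dilate, h]⟩
  have hρ : radius z ≠ 0 := fun h₀ => hz (by rw [radius_eq_zero_iff.1 h₀])
  have hk : scale e p z = 0 := by
    simp only [dilate, add_eq_right, mul_eq_zero, sub_eq_zero] at h
    exact h.resolve_right hz
  rcases div_eq_zero_iff.1 hk with hk | hk
  exacts [hρ ((newRadius_eq_zero_iff hend).1 hk), hρ (min_radius_one_eq_zero_iff.1 hk)]

theorem continuous_dilate_scale [TopologicalSpace M] (hend : PreservesEnds e)
    (hec : Continuous e) : Continuous fun q : P × (ℝ × ℝ) => dilate (scale e q.1 q.2) q.2 := by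
  have hρ : Continuous fun q : P × (ℝ × ℝ) => radius q.2 := continuous_radius.comp continuous_snd
  have hmul (c : P × (ℝ × ℝ) → ℝ) (hc : Continuous c) (hcρ : ∀ q, |c q| ≤ radius q.2) :
      Continuous fun q => scale e q.1 q.2 * c q := by
    refine continuous_div_mul_of_abs_le (continuous_newRadius e hec) (hρ.min continuous_const) hc
      fun q hq => ?_
    have h₀ := min_radius_one_eq_zero_iff.1 hq
    refine ⟨(newRadius_eq_zero_iff hend).2 h₀, ?_⟩
    filter_upwards [hρ.continuousAt.eventually_lt continuousAt_const (h₀.trans_lt one_pos)]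
      with y hy
    rw [min_eq_left hy.le]
    exact hcρ y
  exact (hmul _ (by fun_prop) fun q => abs_fst_le_radius q.2).prodMk
    ((hmul _ (by fun_prop) fun q => abs_snd_sub_one_le_radius q.2).add continuous_const)

variable (e) in
/-- The stabilisation map `σ(e)`. -/
def sigma (x : P × JJ × I) : M × JJ × I :=
  have hz := dilate_scale_mem e x.1 (z := (x.2.1, x.2.2)) ⟨x.2.1.2, x.2.2.2⟩
  ((e (x.1, radialCoord (x.2.1, x.2.2))).1, ⟨_, hz.1⟩, ⟨_, hz.2⟩)

theorem sigma_fst (x : P × JJ × I) :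
    (sigma e x).1 = (e (x.1, radialCoord (x.2.1, x.2.2))).1 := rfl

theorem coe_sigma_snd (x : P × JJ × I) :
    (((sigma e x).2.1 : ℝ), ((sigma e x).2.2 : ℝ))
      = dilate (scale e x.1 (x.2.1, x.2.2)) (x.2.1, x.2.2) := rfl

theorem sigma_eq_self_of_fixed {x : P × JJ × I}
    (hfix : e (x.1, radialCoord (x.2.1, x.2.2)) = ((x.1 : M), radialCoord (x.2.1, x.2.2))) :
    sigma e x = ((x.1 : M), x.2.1, x.2.2) := by
  have h := dilate_scale_of_fixed e (congrArg Prod.snd hfix)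
  exact Prod.ext (by rw [sigma_fst, hfix])
    (Prod.ext (Subtype.ext (congrArg Prod.fst h)) (Subtype.ext (congrArg Prod.snd h)))

theorem continuous_sigma [TopologicalSpace M] (hend : PreservesEnds e) (hec : Continuous e) :
    Continuous (sigma e) := by
  have hz : Continuous fun x : P × JJ × I => (x.1, ((x.2.1 : ℝ), (x.2.2 : ℝ))) := by fun_prop
  have hd := (continuous_dilate_scale hend hec).comp hz
  exact (hec.comp (continuous_fst.prodMk (continuous_radialCoord.comp hz.snd))).fst.prodMk
    ((hd.fst.subtype_mk _).prodMk (hd.snd.subtype_mk _))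

theorem sigma_mem_D1 (p : P) (s : JJ) (t : I) (h : ((s : ℝ), (t : ℝ)) ∈ D1) :
    (((sigma e (p, s, t)).2.1 : ℝ), ((sigma e (p, s, t)).2.2 : ℝ)) ∈ D1 :=
  ⟨(sigma e (p, s, t)).2.1.2, (sigma e (p, s, t)).2.2.2, radius_le_one_iff.1
    ((radius_dilate_scale_le e p (radius_le_one_iff.2 h.2.2)).trans (newRadius_le_one e p _))⟩

theorem _root_.IsConcMap.apply_zero [TopologicalSpace M] {A : Set M} (he : IsConcMap P A e)
    (p : P) : e (p, 0) = ((p : M), 0) := by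
  obtain ⟨U, -, hUs, hUe⟩ := he.2.2
  exact hUe _ (hUs (Or.inl rfl))

theorem isSigmaOf_sigma [TopologicalSpace M] (hend : PreservesEnds e)
    (he₀ : ∀ p, e (p, 0) = ((p : M), 0)) : IsSigmaOf P e (sigma e) := by
  refine ⟨fun p s t r θ _ hst => ?_, fun p s t hD₂ => sigma_eq_self_of_fixed ?_⟩
  · have hr : radialCoord ((s : ℝ), (t : ℝ)) = r := hst ▸ radialCoord_lam r θ
    refine ⟨by rw [sigma_fst, hr], ?_⟩
    rw [coe_sigma_snd]
    dsimp only
    rw [hst]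
    exact dilate_scale_lam hend p r θ
  · rw [radialCoord_eq_zero_iff.2 (one_le_radius_iff.2 hD₂.2.2)]
    exact he₀ p

theorem isConcMapJ_sigma [TopologicalSpace M] {A : Set M} (he : IsConcMap P A e) :
    IsConcMapJ P A (sigma e) := by
  obtain ⟨hec, hend, U, hUo, hUs, hUe⟩ := he
  set base : P × JJ × I → P × I := fun x => (x.1, radialCoord (x.2.1, x.2.2))
  have hfar (x : P × JJ × I) (hx : 1 ≤ radius (x.2.1, x.2.2)) : base x ∈ U := by
    simp only [base, radialCoord_eq_zero_iff.2 hx]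
    exact hUs (Or.inl rfl)
  refine ⟨continuous_sigma hend hec, fun x => ⟨?_, ?_⟩, base ⁻¹' U, ?_, ?_,
    fun x hx => sigma_eq_self_of_fixed (hUe _ hx)⟩
  · rw [← Icc.coe_eq_zero, ← Icc.coe_eq_zero]
    exact dilate_scale_snd_eq_zero_iff hend ⟨x.2.1.2, x.2.2.2⟩
  · rw [← Icc.coe_eq_one, ← Icc.coe_eq_one]
    exact dilate_scale_snd_eq_one_iff hend
  · exact hUo.preimage (continuous_fst.prodMk (continuous_radialCoord.comp (by fun_prop)))
  · rintro x (ht | hA | hs | hs)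
    · exact hfar x (by simpa [show (x.2.2 : ℝ) = 0 from congrArg Subtype.val ht]
        using abs_snd_sub_one_le_radius ((x.2.1 : ℝ), (x.2.2 : ℝ)))
    · exact hUs (Or.inr hA)
    all_goals exact hfar x (by simpa [hs] using abs_fst_le_radius ((x.2.1 : ℝ), (x.2.2 : ℝ)))

end Stabilisation

open Stabilisation

theorem statement3_general {M : Type} [TopologicalSpace M] (P A : Set M)
    (e : ↥P × ↥I → M × ↥I) (he : IsConcMap P A e) :
    ∃ F : ↥P × ↥JJ × ↥I → M × ↥JJ × ↥I,
      -- the two clauses consistently define a map `σ(e) = F` (in particular, on `P × D₁` the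
      -- value is independent of the chosen polar representation, and the clauses agree on
      -- `P × (D₁ ∩ D₂)`), which is
      IsSigmaOf P e F ∧
      -- continuous,
      Continuous F ∧
      -- maps `P × D₁` into `M × D₁` and `P × D₂` into `M × D₂`,
      (∀ (p : ↥P) (s : ↥JJ) (t : ↥I), ((s : ℝ), (t : ℝ)) ∈ D1 →
        (((F (p, s, t)).2.1 : ℝ), ((F (p, s, t)).2.2 : ℝ)) ∈ D1) ∧
      (∀ (p : ↥P) (s : ↥JJ) (t : ↥I), ((s : ℝ), (t : ℝ)) ∈ D2 →
        (((F (p, s, t)).2.1 : ℝ), ((F (p, s, t)).2.2 : ℝ)) ∈ D2) ∧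
      -- preserves the radial segments of `D₁`,
      (∀ (p : ↥P) (s : ↥JJ) (t : ↥I) (r : ↥I) (θ : ℝ), θ ∈ Set.Icc 0 Real.pi →
        ((s : ℝ), (t : ℝ)) = Lam ((r : ℝ), θ) →
        (((F (p, s, t)).2.1 : ℝ), ((F (p, s, t)).2.2 : ℝ))
          ∈ Lam '' (Set.Icc (0:ℝ) 1 ×ˢ {θ})) ∧
      -- and is itself a continuous concordance map of `P × J` in `M × J` relative to
      -- `(A × J) ∪ (P × {−1,1})`.
      IsConcMapJ P A F := by
  have hsig := isSigmaOf_sigma he.2.1 he.apply_zero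
  refine ⟨sigma e, hsig, continuous_sigma he.2.1 he.1, sigma_mem_D1, fun p s t hD₂ => ?_,
    fun p s t r θ hθ hst => ?_, isConcMapJ_sigma he⟩
  · rw [hsig.2 p s t hD₂]
    exact hD₂
  · rw [(hsig.1 p s t r θ hθ hst).2]
    exact mem_image_of_mem Lam ⟨(e (p, r)).2.2, rfl⟩

theorem statement3 {M : Type} [TopologicalSpace M] (P A : Set M) (hAP : A ⊆ P)
    (e : ↥P × ↥I → M × ↥I) (he : IsConcMap P A e) :
    ∃ F : ↥P × ↥JJ × ↥I → M × ↥JJ × ↥I,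
      -- the two clauses consistently define a map `σ(e) = F` (in particular, on `P × D₁` the
      -- value is independent of the chosen polar representation, and the clauses agree on
      -- `P × (D₁ ∩ D₂)`), which is
      IsSigmaOf P e F ∧
      -- continuous,
      Continuous F ∧
      -- maps `P × D₁` into `M × D₁` and `P × D₂` into `M × D₂`,
      (∀ (p : ↥P) (s : ↥JJ) (t : ↥I), ((s : ℝ), (t : ℝ)) ∈ D1 →
        (((F (p, s, t)).2.1 : ℝ), ((F (p, s, t)).2.2 : ℝ)) ∈ D1) ∧
      (∀ (p : ↥P) (s : ↥JJ) (t : ↥I), ((s : ℝ), (t : ℝ)) ∈ D2 →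
        (((F (p, s, t)).2.1 : ℝ), ((F (p, s, t)).2.2 : ℝ)) ∈ D2) ∧
      -- preserves the radial segments of `D₁`,
      (∀ (p : ↥P) (s : ↥JJ) (t : ↥I) (r : ↥I) (θ : ℝ), θ ∈ Set.Icc 0 Real.pi →
        ((s : ℝ), (t : ℝ)) = Lam ((r : ℝ), θ) →
        (((F (p, s, t)).2.1 : ℝ), ((F (p, s, t)).2.2 : ℝ))
          ∈ Lam '' (Set.Icc (0:ℝ) 1 ×ˢ {θ})) ∧
      -- and is itself a continuous concordance map of `P × J` in `M × J` relative to
      -- `(A × J) ∪ (P × {−1,1})`.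
      IsConcMapJ P A F :=
  statement3_general P A e he
end
end

section
/- (Core of the proof of Lemma 3.6 of 'Stability of concordance embeddings'.) Let f be a continuous concordance map of the point ∗ in M. Then for every s ∈ J with s ≠ 0, the map I → M×J×I, t ↦ σ(f)(s,t), is injective; in particular, if M is Hausdorff, it is a topological embedding of the compact interval I. -/
open Set unitInterval Topology

noncomputable section

/-- `f : I → M × I` is a continuous concordance map of the point `∗` in `M`. -/
def IsPtConcMap {M : Type} [TopologicalSpace M] (star : M) (f : ↥I → M × ↥I) : Prop :=
  Continuous f ∧
  (∀ t : ↥I, ((f t).2 = 0 ↔ t = 0) ∧ ((f t).2 = 1 ↔ t = 1)) ∧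
  ∃ U ∈ nhds (0 : ↥I), ∀ t ∈ U, f t = (star, t)

/-- `F : J × I → M × J × I` satisfies the two clauses defining the stabilisation `σ(f)` of a
concordance map `f` of the point `∗` in `M`. -/
def IsSigmaPt {M : Type} [TopologicalSpace M] (star : M) (f : ↥I → M × ↥I)
    (F : ↥JJ × ↥I → M × ↥JJ × ↥I) : Prop :=
  (∀ (s : ↥JJ) (t : ↥I) (r : ↥I) (θ : ℝ), θ ∈ Set.Icc 0 Real.pi →
    ((s : ℝ), (t : ℝ)) = Lam ((r : ℝ), θ) →
    (F (s, t)).1 = (f r).1 ∧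
    (((F (s, t)).2.1 : ℝ), ((F (s, t)).2.2 : ℝ)) = Lam (((f r).2 : ℝ), θ)) ∧
  (∀ (s : ↥JJ) (t : ↥I), ((s : ℝ), (t : ℝ)) ∈ D2 → F (s, t) = (star, s, t))

/-!
In polar coordinates about `(0,1)`, `σ(f)` is radial: a point at distance `d` from `(0,1)` is
moved along its ray to distance `1 - f_I(1 - d)` when `d ≤ 1`, and left fixed when `d ≥ 1`.
For `s ≠ 0` the points `(s,t)` lie at positive distance, so `f_I(1 - d) < 1` and the image
lies on the same ray at positive distance; its first coordinate then determines the scaling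
factor, and the second one determines `t`. Continuity of the slice comes from writing it by a
single formula, and a continuous injection of the compact `I` into a Hausdorff space is an
embedding.
-/

def polarRadius (s t : ℝ) : ℝ := √(s ^ 2 + (t - 1) ^ 2)

def polarAngle (s t : ℝ) : ℝ := Real.arccos (-s / polarRadius s t)

lemma polarRadius_pos {s : ℝ} (hs : s ≠ 0) (t : ℝ) : 0 < polarRadius s t :=
  Real.sqrt_pos.mpr (by positivity)

lemma continuous_polarRadius (s : ℝ) : Continuous (polarRadius s) := by
  unfold polarRadius; fun_prop

lemma polarAngle_mem_Icc (s t : ℝ) : polarAngle s t ∈ Icc 0 Real.pi :=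
  ⟨Real.arccos_nonneg _, Real.arccos_le_pi _⟩

lemma Lam_polarAngle (ρ : ℝ) {s t : ℝ} (hs : s ≠ 0) (ht : t ≤ 1) :
    Lam (ρ, polarAngle s t) =
      (s * ((1 - ρ) / polarRadius s t), 1 + (t - 1) * ((1 - ρ) / polarRadius s t)) := by
  set d := polarRadius s t
  have hd : 0 < d := polarRadius_pos hs t
  have hd_sq : d ^ 2 = s ^ 2 + (t - 1) ^ 2 := Real.sq_sqrt (by positivity)
  have hs_le : |s| ≤ d := Real.abs_le_sqrt (by nlinarith)
  obtain ⟨hs_lo, hs_hi⟩ := abs_le.mp hs_le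
  have hcos : Real.cos (polarAngle s t) = -s / d := by
    apply Real.cos_arccos
    · rw [le_div_iff₀ hd]; linarith
    · rw [div_le_one hd]; linarith
  have hsin : Real.sin (polarAngle s t) = (1 - t) / d := by
    rw [polarAngle, Real.sin_arccos,
      show 1 - (-s / d) ^ 2 = ((1 - t) / d) ^ 2 by field_simp; linarith]
    exact Real.sqrt_sq (div_nonneg (by linarith) hd.le)
  simp only [Lam, Real.cos_add_pi, Real.sin_add_pi, hcos, hsin]
  ext <;> ring

lemma Lam_one_sub_polarRadius {s t : ℝ} (hs : s ≠ 0) (ht : t ≤ 1) :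
    Lam (1 - polarRadius s t, polarAngle s t) = (s, t) := by
  rw [Lam_polarAngle _ hs ht, sub_sub_cancel, div_self (polarRadius_pos hs t).ne']
  ext <;> simp

section Slice

variable {M : Type} (f : I → M × I)

def radialParam (d : ℝ) : I := projIcc 0 1 zero_le_one (1 - d)

/-- The distance from `(0,1)` to which `σ(f)` moves a point at distance `d`. For `d ≥ 1` the
parameter is clamped to `0`, where `f = (∗, 0)`, so the `max` term makes this `d` there and lets
the slice below be written by one formula. -/
def radialProfile (d : ℝ) : ℝ := 1 - (f (radialParam d)).2 + max (d - 1) 0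

def sigmaSlice (s : ℝ) (t : I) : M × ℝ × ℝ :=
  let d := polarRadius s t
  ((f (radialParam d)).1, s * (radialProfile f d / d), 1 + (t - 1) * (radialProfile f d / d))

lemma continuous_sigmaSlice [TopologicalSpace M] (hf : Continuous f) {s : ℝ} (hs : s ≠ 0) :
    Continuous (sigmaSlice f s) := by
  have hd : Continuous fun t : I => polarRadius s t :=
    (continuous_polarRadius s).comp continuous_subtype_val
  have hfr : Continuous fun t : I => f (radialParam (polarRadius s t)) :=
    hf.comp (continuous_projIcc.comp (continuous_const.sub hd))
  have hk : Continuous fun t : I => radialProfile f (polarRadius s t) / polarRadius s t :=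
    (((continuous_const.sub (continuous_subtype_val.comp (continuous_snd.comp hfr))).add
      ((hd.sub continuous_const).max continuous_const)).div hd)
      fun t => (polarRadius_pos hs t).ne'
  exact (continuous_fst.comp hfr).prodMk ((continuous_const.mul hk).prodMk
    (continuous_const.add ((continuous_subtype_val.sub continuous_const).mul hk)))

lemma radialProfile_pos (hf : ∀ r, (f r).2 = 1 → r = 1) {d : ℝ} (hd : 0 < d) :
    0 < radialProfile f d := by
  have hr : radialParam d ≠ 1 := fun h => by
    have := (projIcc_eq_right (a := (0 : ℝ)) zero_lt_one).mp h
    linarith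
  have hρ : ((f (radialParam d)).2 : ℝ) < 1 :=
    lt_of_le_of_ne (f _).2.2.2 fun h => hr (hf _ (Subtype.ext h))
  unfold radialProfile
  linarith [le_max_right (d - 1) 0]

lemma injective_snd_sigmaSlice (hf : ∀ r, (f r).2 = 1 → r = 1) {s : ℝ} (hs : s ≠ 0) :
    Function.Injective fun t => (sigmaSlice f s t).2 := by
  intro t t' h
  simp only [sigmaSlice, Prod.mk.injEq] at h
  obtain ⟨h_fst, h_snd⟩ := h
  have hk := mul_left_cancel₀ hs h_fst
  have hk_pos : 0 < radialProfile f (polarRadius s t) / polarRadius s t :=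
    div_pos (radialProfile_pos f hf (polarRadius_pos hs t)) (polarRadius_pos hs t)
  rw [← hk] at h_snd
  exact Subtype.ext (by simpa using mul_right_cancel₀ hk_pos.ne' (add_left_cancel h_snd))

lemma IsSigmaPt.slice_eq [TopologicalSpace M] {star : M} {f : I → M × I}
    {F : JJ × I → M × JJ × I} (hF : IsSigmaPt star f F) (hf₀ : f 0 = (star, 0)) (s : JJ)
    (hs : (s : ℝ) ≠ 0) (t : I) :
    ((F (s, t)).1, ((F (s, t)).2.1 : ℝ), ((F (s, t)).2.2 : ℝ)) = sigmaSlice f s t := by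
  set d := polarRadius s t
  have hd : 0 < d := polarRadius_pos hs t
  have hd_sq : d ^ 2 = s ^ 2 + ((t : ℝ) - 1) ^ 2 := Real.sq_sqrt (by positivity)
  rcases le_or_gt d 1 with hd₁ | hd₁
  · have hr : radialParam d = ⟨1 - d, by constructor <;> linarith⟩ :=
      projIcc_of_mem _ _
    obtain ⟨h_fst, h_snd⟩ := hF.1 s t (radialParam d) (polarAngle s t) (polarAngle_mem_Icc _ _)
      (by rw [hr]; exact (Lam_one_sub_polarRadius hs t.2.2).symm)
    rw [h_fst, h_snd, Lam_polarAngle _ hs t.2.2, sigmaSlice, radialProfile,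
      max_eq_right (by linarith), add_zero]
  · have hr : radialParam d = 0 := projIcc_of_le_left _ (by linarith)
    rw [hF.2 s t ⟨s.2, t.2, by nlinarith⟩, sigmaSlice, radialProfile, hr, hf₀,
      max_eq_left (by linarith)]
    simp [(polarRadius_pos hs t).ne']

end Slice

theorem statement6 {M : Type} [TopologicalSpace M] (star : M)
    (f : ↥I → M × ↥I) (hf : IsPtConcMap star f)
    (F : ↥JJ × ↥I → M × ↥JJ × ↥I) (hF : IsSigmaPt star f F) :
    ∀ s : ↥JJ, (s : ℝ) ≠ 0 →
      Function.Injective (fun t : ↥I => F (s, t)) ∧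
      (∀ (_ : T2Space M), IsEmbedding (fun t : ↥I => F (s, t))) := by
  intro s hs
  obtain ⟨hf_cont, hf_end, U, hU, hfU⟩ := hf
  have hf₀ : f 0 = (star, 0) := hfU 0 (mem_of_mem_nhds hU)
  have he : IsEmbedding (Prod.map id (Prod.map Subtype.val Subtype.val) :
      M × JJ × I → M × ℝ × ℝ) :=
    IsEmbedding.id.prodMap (IsEmbedding.subtypeVal.prodMap IsEmbedding.subtypeVal)
  have h_comp : Prod.map id (Prod.map Subtype.val Subtype.val) ∘ (fun t => F (s, t)) =
      sigmaSlice f s := funext (hF.slice_eq hf₀ s hs)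
  have h_inj : Function.Injective fun t => F (s, t) := by
    refine Function.Injective.of_comp (f := Prod.map id (Prod.map Subtype.val Subtype.val)) ?_
    rw [h_comp]
    exact fun t t' h => injective_snd_sigmaSlice f (fun r => (hf_end r).2.1) hs
      (congrArg Prod.snd h)
  have h_cont : Continuous fun t => F (s, t) := by
    rw [he.continuous_iff, h_comp]
    exact continuous_sigmaSlice f hf_cont hs
  exact ⟨h_inj, fun _ => (h_cont.isClosedEmbedding h_inj).isEmbedding⟩
end
end

section
/- (Key planar estimate in the proof of Lemma 3.8 of 'Stability of concordance embeddings'.) (i) Let s ∈ [−1,0) and set t₀ = 1 − √(1−s²); for t₀ ≤ t₁ < t₂ ≤ 1 write (s,t_i) = Λ(r_i,θ_i) with (r_i,θ_i) ∈ [0,1)×[0,π] (possible and unique since Λ restricts to a homeomorphism [0,1)×[0,π] ≅ D₁ ∖ {(0,1)}); then 0 ≤ θ₂ < θ₁ < π/2. (ii) For any angles 0 ≤ θ₂ < θ₁ ≤ π/2 and any radii ρ₁, ρ₂ ∈ [0,1]: if the second coordinates of Λ(ρ₁,θ₁) and Λ(ρ₂,θ₂) are equal, then the first coordinate of Λ(ρ₁,θ₁)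 is greater than or equal to the first coordinate of Λ(ρ₂,θ₂). -/
/-!
In the coordinates `Λ(r,θ) = (-(1-r) cos θ, 1 - (1-r) sin θ)`, both parts compare two points
`aᵢ(cos θᵢ, sin θᵢ)` of the closed upper half-plane. Their cross product is
`a₁ a₂ sin(θ₁ - θ₂)`, which is `≥ 0` as soon as `0 ≤ θ₁ - θ₂ ≤ π`; so when one coordinate
of the two points agrees, the other is ordered like the angles. For (i) the common
coordinate is `cos`, and `s < 0` forces both angles into `[0, π/2)`; for (ii) it is `sin`.
-/

open Set Topology

noncomputable section

open Real

theorem Lam_fst (r θ : ℝ) : (Lam (r, θ)).1 = -((1 - r) * cos θ) := by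
  simp [Lam, cos_add_pi]

theorem Lam_snd (r θ : ℝ) : (Lam (r, θ)).2 = 1 - (1 - r) * sin θ := by
  simp [Lam, sin_add_pi]
  ring

theorem mul_cos_le_of_mul_sin_eq {a b θ φ : ℝ} (hb : 0 ≤ b) (hφθ : φ ≤ θ) (hθφ : θ ≤ φ + π)
    (hθ : 0 < sin θ) (h : a * sin θ = b * sin φ) : a * cos θ ≤ b * cos φ := by
  have hsub : 0 ≤ sin (θ - φ) := sin_nonneg_of_nonneg_of_le_pi (by linarith) (by linarith)
  rw [sin_sub] at hsub
  refine le_of_mul_le_mul_left ?_ hθ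
  calc sin θ * (a * cos θ) = b * sin φ * cos θ := by rw [← h]; ring
    _ ≤ b * sin φ * cos θ + b * (sin θ * cos φ - cos θ * sin φ) :=
        le_add_of_nonneg_right (mul_nonneg hb hsub)
    _ = sin θ * (b * cos φ) := by ring

theorem mul_sin_le_of_mul_cos_eq {a b θ φ : ℝ} (hb : 0 ≤ b) (hθφ : θ ≤ φ) (hφθ : φ ≤ θ + π)
    (hθ : 0 < cos θ) (h : a * cos θ = b * cos φ) : a * sin θ ≤ b * sin φ := by
  have := mul_cos_le_of_mul_sin_eq (θ := π / 2 - θ) (φ := π / 2 - φ) (a := a) hb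
    (by linarith) (by linarith) (by rwa [sin_pi_div_two_sub])
    (by rwa [sin_pi_div_two_sub, sin_pi_div_two_sub])
  rwa [cos_pi_div_two_sub, cos_pi_div_two_sub] at this

theorem lt_pi_div_two_of_Lam_fst_neg {r θ : ℝ} (hr : r ≤ 1) (hθ : θ ≤ π)
    (hs : (Lam (r, θ)).1 < 0) : 0 < cos θ ∧ θ < π / 2 := by
  rw [Lam_fst, neg_lt_zero] at hs
  have hcos : 0 < cos θ := pos_of_mul_pos_right hs (by linarith)
  refine ⟨hcos, lt_of_not_ge fun hπ => hcos.not_ge ?_⟩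
  exact cos_nonpos_of_pi_div_two_le_of_le hπ (by linarith [pi_pos])

theorem Lam_angle_lt_of_fst_eq_of_snd_lt {r₁ θ₁ r₂ θ₂ : ℝ} (hr₁ : r₁ ≤ 1) (hr₂ : r₂ ≤ 1)
    (hθ₁ : θ₁ ∈ Set.Icc 0 π) (hθ₂ : θ₂ ∈ Set.Icc 0 π) (hneg : (Lam (r₁, θ₁)).1 < 0)
    (hfst : (Lam (r₁, θ₁)).1 = (Lam (r₂, θ₂)).1) (hsnd : (Lam (r₁, θ₁)).2 < (Lam (r₂, θ₂)).2) :
    θ₂ < θ₁ := by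
  obtain ⟨hcos, -⟩ := lt_pi_div_two_of_Lam_fst_neg hr₁ hθ₁.2 hneg
  rw [Lam_fst, Lam_fst, neg_inj] at hfst
  rw [Lam_snd, Lam_snd] at hsnd
  by_contra! hle
  have := mul_sin_le_of_mul_cos_eq (sub_nonneg.2 hr₂) hle (by linarith [hθ₁.1, hθ₂.2]) hcos hfst
  linarith

theorem Lam_fst_le_of_snd_eq {θ₁ θ₂ ρ₁ ρ₂ : ℝ} (hθ₂ : 0 ≤ θ₂) (hθ : θ₂ < θ₁)
    (hθ₁ : θ₁ ≤ π / 2) (hρ₂ : ρ₂ ≤ 1) (h : (Lam (ρ₁, θ₁)).2 = (Lam (ρ₂, θ₂)).2) :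
    (Lam (ρ₂, θ₂)).1 ≤ (Lam (ρ₁, θ₁)).1 := by
  rw [Lam_snd, Lam_snd, sub_right_inj] at h
  rw [Lam_fst, Lam_fst, neg_le_neg_iff]
  exact mul_cos_le_of_mul_sin_eq (sub_nonneg.2 hρ₂) hθ.le (by linarith [pi_pos])
    (sin_pos_of_pos_of_lt_pi (by linarith) (by linarith [pi_pos])) h

theorem statement7 :
    -- (i) for s ∈ [−1,0) and t₀ = 1 − √(1−s²) ≤ t₁ < t₂ ≤ 1, writing
    -- (s,tᵢ) = Λ(rᵢ,θᵢ) with (rᵢ,θᵢ) ∈ [0,1)×[0,π], one has 0 ≤ θ₂ < θ₁ < π/2.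
    (∀ s t₁ t₂ r₁ θ₁ r₂ θ₂ : ℝ,
      s ∈ Set.Ico (-1:ℝ) 0 →
      1 - Real.sqrt (1 - s ^ 2) ≤ t₁ → t₁ < t₂ → t₂ ≤ 1 →
      (r₁, θ₁) ∈ Set.Ico (0:ℝ) 1 ×ˢ Set.Icc (0:ℝ) Real.pi →
      (r₂, θ₂) ∈ Set.Ico (0:ℝ) 1 ×ˢ Set.Icc (0:ℝ) Real.pi →
      (s, t₁) = Lam (r₁, θ₁) → (s, t₂) = Lam (r₂, θ₂) →
      0 ≤ θ₂ ∧ θ₂ < θ₁ ∧ θ₁ < Real.pi / 2) ∧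
    -- (ii) for angles 0 ≤ θ₂ < θ₁ ≤ π/2 and radii ρ₁, ρ₂ ∈ [0,1]: if the second coordinates
    -- of Λ(ρ₁,θ₁) and Λ(ρ₂,θ₂) agree, then the first coordinate of Λ(ρ₁,θ₁) is ≥ that of
    -- Λ(ρ₂,θ₂).
    (∀ θ₁ θ₂ ρ₁ ρ₂ : ℝ,
      0 ≤ θ₂ → θ₂ < θ₁ → θ₁ ≤ Real.pi / 2 →
      ρ₁ ∈ Set.Icc (0:ℝ) 1 → ρ₂ ∈ Set.Icc (0:ℝ) 1 →
      (Lam (ρ₁, θ₁)).2 = (Lam (ρ₂, θ₂)).2 →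
      (Lam (ρ₂, θ₂)).1 ≤ (Lam (ρ₁, θ₁)).1) := by
  refine ⟨?_, fun θ₁ θ₂ ρ₁ ρ₂ hθ₂ hθ hθ₁ _ hρ₂ h => Lam_fst_le_of_snd_eq hθ₂ hθ hθ₁ hρ₂.2 h⟩
  intro s t₁ t₂ r₁ θ₁ r₂ θ₂ hs _ ht _ ⟨hr₁, hθ₁⟩ ⟨hr₂, hθ₂⟩ e₁ e₂
  have hneg : (Lam (r₁, θ₁)).1 < 0 := e₁ ▸ hs.2
  refine ⟨hθ₂.1, ?_, (lt_pi_div_two_of_Lam_fst_neg hr₁.2.le hθ₁.2 hneg).2⟩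
  refine Lam_angle_lt_of_fst_eq_of_snd_lt hr₁.2.le hr₂.2.le hθ₁ hθ₂ hneg ?_ ?_
  · rw [← e₁, ← e₂]
  · rwa [← e₁, ← e₂]
end
end

section
/- (Lemma 3.8 of 'Stability of concordance embeddings', with the orientation conventions determined by the explicit formula for Λ.) Let f be a continuous concordance map of the point ∗ in M, and let 0 < t₁ < t₂ < 1. Then for every s ∈ [−1,0) the point σ(f)(s,t₁) is not directly to the left of σ(f)(s,t₂), and for every s ∈ (0,1] the point σ(f)(s,t₁) is not directly to the right of σ(f)(s,t₂). -/
/-!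
`Λ` is polar coordinates around the point `(0,1)`, and `σ(f)` keeps the angle `θ` while
changing the radius from `1 - r` to `1 - f_I(r) ≥ 0`. Hence `σ(f)` moves every point `(s,t)`
with `t < 1` along its own ray from `(0,1)`: its image is `(a s, 1 - a (1 - t))` for some
scale `a ≥ 0`. If `σ(f)(s,t₁)` and `σ(f)(s,t₂)` have the same height, the scales satisfy
`a₁ (1 - t₁) = a₂ (1 - t₂)`, so `a₁ ≤ a₂`; the horizontal coordinates `a₁ s` and `a₂ s` are then
ordered the wrong way for the claimed relative position.
-/

open Set unitInterval Topology

noncomputable section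

/-- `p₁` is directly to the right of `p₂` in `M × J × I`. -/
def DirRight {M : Type} (p₁ p₂ : M × ↥JJ × ↥I) : Prop :=
  p₁.1 = p₂.1 ∧ p₁.2.2 = p₂.2.2 ∧ (p₂.2.1 : ℝ) < (p₁.2.1 : ℝ)

/-- `p₁` is directly to the left of `p₂` in `M × J × I`. -/
def DirLeft {M : Type} (p₁ p₂ : M × ↥JJ × ↥I) : Prop :=
  p₁.1 = p₂.1 ∧ p₁.2.2 = p₂.2.2 ∧ (p₁.2.1 : ℝ) < (p₂.2.1 : ℝ)

lemma Lam_apply (r θ : ℝ) :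
    Lam (r, θ) = (-((1 - r) * Real.cos θ), 1 - (1 - r) * Real.sin θ) := by
  simp only [Lam, Real.cos_add_pi, Real.sin_add_pi, Prod.mk.injEq]
  constructor <;> ring

lemma exists_scale_of_sigma {M : Type} [TopologicalSpace M] {star : M} {f : ↥I → M × ↥I}
    {F : ↥JJ × ↥I → M × ↥JJ × ↥I} (hF : IsSigmaPt star f F) (s : ↥JJ) {t : ↥I}
    (ht : (t : ℝ) < 1) :
    ∃ a : ℝ, 0 ≤ a ∧ ((F (s, t)).2.1 : ℝ) = a * s ∧ 1 - ((F (s, t)).2.2 : ℝ) = a * (1 - t) := by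
  rcases le_total ((s : ℝ) ^ 2 + ((t : ℝ) - 1) ^ 2) 1 with hD1 | hD2
  · set z : ℂ := ⟨-s, 1 - t⟩
    have hR_pos : 0 < ‖z‖ := norm_pos_iff.2 fun h => by
      have := congrArg Complex.im h
      simp only [z, Complex.zero_im] at this
      linarith
    have hR_le : ‖z‖ ≤ 1 := by
      rw [← abs_norm, ← sq_le_one_iff_abs_le_one, Complex.sq_norm, Complex.normSq_mk]
      nlinarith
    have hcos : ‖z‖ * Real.cos z.arg = -s := Complex.norm_mul_cos_arg z
    have hsin : ‖z‖ * Real.sin z.arg = 1 - t := Complex.norm_mul_sin_arg z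
    let r : ↥I := ⟨1 - ‖z‖, by constructor <;> linarith⟩
    have hθ : z.arg ∈ Icc 0 Real.pi := ⟨Complex.arg_nonneg_iff.2 (sub_nonneg.2 ht.le),
      Complex.arg_le_pi z⟩
    have hst : ((s : ℝ), (t : ℝ)) = Lam (r, z.arg) := by
      simp only [Lam_apply, r, sub_sub_cancel, hcos, hsin, neg_neg]
    obtain ⟨-, himage⟩ := hF.1 s t r z.arg hθ hst
    rw [Lam_apply, Prod.mk.injEq] at himage
    refine ⟨(1 - (f r).2) / ‖z‖, div_nonneg (sub_nonneg.2 (f r).2.2.2) hR_pos.le, ?_, ?_⟩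
    · rw [himage.1, div_mul_eq_mul_div, eq_div_iff hR_pos.ne']
      linear_combination (-(1 - ((f r).2 : ℝ))) * hcos
    · rw [himage.2, div_mul_eq_mul_div, eq_div_iff hR_pos.ne']
      linear_combination (1 - ((f r).2 : ℝ)) * hsin
  · refine ⟨1, zero_le_one, ?_, ?_⟩ <;> simp [hF.2 s t ⟨s.2, t.2, hD2⟩]

lemma le_of_mul_one_sub_eq {a₁ a₂ t₁ t₂ : ℝ} (ha₁ : 0 ≤ a₁) (h12 : t₁ ≤ t₂) (h2 : t₂ < 1)
    (h : a₁ * (1 - t₁) = a₂ * (1 - t₂)) : a₁ ≤ a₂ := by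
  have : a₁ * (1 - t₂) ≤ a₂ * (1 - t₂) := h ▸ mul_le_mul_of_nonneg_left (by linarith) ha₁
  exact le_of_mul_le_mul_right this (by linarith)

theorem statement8_general {M : Type} [TopologicalSpace M] (star : M)
    (f : ↥I → M × ↥I)
    (F : ↥JJ × ↥I → M × ↥JJ × ↥I) (hF : IsSigmaPt star f F)
    (t₁ t₂ : ↥I) (h12 : (t₁ : ℝ) < (t₂ : ℝ)) (h1 : (t₂ : ℝ) < 1) :
    (∀ s : ↥JJ, (s : ℝ) < 0 → ¬ DirLeft (F (s, t₁)) (F (s, t₂))) ∧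
    (∀ s : ↥JJ, 0 < (s : ℝ) → ¬ DirRight (F (s, t₁)) (F (s, t₂))) := by
  have scales_le : ∀ s : ↥JJ, (F (s, t₁)).2.2 = (F (s, t₂)).2.2 →
      ∃ a₁ a₂ : ℝ, a₁ ≤ a₂ ∧
        ((F (s, t₁)).2.1 : ℝ) = a₁ * s ∧ ((F (s, t₂)).2.1 : ℝ) = a₂ * s := by
    intro s hheight
    obtain ⟨a₁, ha₁, hx₁, hy₁⟩ := exists_scale_of_sigma hF s (h12.trans h1)
    obtain ⟨a₂, -, hx₂, hy₂⟩ := exists_scale_of_sigma hF s h1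
    rw [hheight, hy₂] at hy₁
    exact ⟨a₁, a₂, le_of_mul_one_sub_eq ha₁ h12.le h1 hy₁.symm, hx₁, hx₂⟩
  refine ⟨fun s hs ⟨_, hheight, hx⟩ => ?_, fun s hs ⟨_, hheight, hx⟩ => ?_⟩ <;>
  · obtain ⟨a₁, a₂, ha, hx₁, hx₂⟩ := scales_le s hheight
    rw [hx₁, hx₂] at hx
    nlinarith

theorem statement8 {M : Type} [TopologicalSpace M] (star : M)
    (f : ↥I → M × ↥I) (hf : IsPtConcMap star f)
    (F : ↥JJ × ↥I → M × ↥JJ × ↥I) (hF : IsSigmaPt star f F)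
    (t₁ t₂ : ↥I) (h0 : (0:ℝ) < (t₁ : ℝ)) (h12 : (t₁ : ℝ) < (t₂ : ℝ)) (h1 : (t₂ : ℝ) < 1) :
    (∀ s : ↥JJ, (s : ℝ) < 0 → ¬ DirLeft (F (s, t₁)) (F (s, t₂))) ∧
    (∀ s : ↥JJ, 0 < (s : ℝ) → ¬ DirRight (F (s, t₁)) (F (s, t₂))) :=
  statement8_general star f F hF t₁ t₂ h12 h1
end
end

section
/- (Contractibility of C₊ and C₋, Step 4 in Section 3.1 of 'Stability of concordance embeddings', continuous analogue.) Let ∗ ∈ M and 0 < t₁ < t₂ < 1. Let E denote the space of continuous maps f : I → M×J×I, with the compact-open topology, such that f⁻¹(M×J×{i}) = {i} for i = 0,1, f(t) = (∗,0,t) for all t in some neighbourhood of 0, and f(t₁) ≠ f(t₂). Let C₊ ⊆ E be the subspace of those f for which f(t₁) is not directly to the right of f(t₂), and C₋ ⊆ E the subspace of those f for which f(t₁) is not directly to the left of f(t₂). Then C₊ and C₋ are contractible. -/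
/-!
The space `C₊` is contracted in three stages. First the `J`-coordinate is moved linearly, with a
weight that vanishes near `0` and equals `1` at `t₁` and `t₂`, towards a target path whose value
at `t₁` is smaller than at `t₂`; along the way, whenever `f t₁` and `f t₂` lie on a common
`J`-line, `f t₁` stays strictly to the left of `f t₂`. Once the `J`-coordinate of `f t₁` is
smaller than that of `f t₂`, the `I`-coordinate can be straightened linearly to `t`. Finally, with
`I`-coordinate `t` the points over `t₁ ≠ t₂` never meet, and precomposing the `M × J`-part with
`t ↦ (1 - s) t` shrinks the map onto the germ `t ↦ (∗, 0, t)`. The space `C₋` is `C₊` with `t₁`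
and `t₂` exchanged.
-/

open Set unitInterval Topology

noncomputable section

def jzero : ↥JJ := ⟨0, by norm_num⟩

/-- The defining conditions of the space `E`: `f : I → M × J × I` is continuous (it is a
`ContinuousMap`), `f⁻¹(M×J×{i}) = {i}` for `i = 0,1`, `f(t) = (∗,0,t)` for `t` in some
neighbourhood of `0`, and `f(t₁) ≠ f(t₂)`. -/
def ECond {M : Type} [TopologicalSpace M] (star : M) (t₁ t₂ : ↥I)
    (f : C(↥I, M × ↥JJ × ↥I)) : Prop :=
  (∀ t : ↥I, ((f t).2.2 = 0 ↔ t = 0) ∧ ((f t).2.2 = 1 ↔ t = 1)) ∧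
  (∃ U ∈ nhds (0 : ↥I), ∀ t ∈ U, f t = (star, jzero, t)) ∧
  f t₁ ≠ f t₂

open Filter

theorem exists_continuousMap_unitInterval_eqOn_zero_one {X : Type*} [TopologicalSpace X]
    [NormalSpace X] {s t : Set X} (hs : IsClosed s) (ht : IsClosed t) (hd : Disjoint s t) :
    ∃ f : C(X, I), EqOn f 0 s ∧ EqOn f 1 t := by
  obtain ⟨f, hf₀, hf₁, hf⟩ := exists_continuous_zero_one_of_isClosed hs ht hd
  exact ⟨⟨fun x => ⟨f x, hf x⟩, by fun_prop⟩, fun x hx => Subtype.ext (hf₀ hx),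
    fun x hx => Subtype.ext (hf₁ hx)⟩

theorem exists_continuousMap_unitInterval_eventually_zero {X : Type*} [TopologicalSpace X]
    [NormalSpace X] [RegularSpace X] {x : X} {K : Set X} (hK : IsClosed K) (hx : x ∉ K) :
    ∃ f : C(X, I), (∀ᶠ y in 𝓝 x, f y = 0) ∧ EqOn f 1 K := by
  obtain ⟨U, hU, hUc, hUK⟩ := exists_mem_nhds_isClosed_subset (hK.isOpen_compl.mem_nhds hx)
  obtain ⟨f, hf₀, hf₁⟩ :=
    exists_continuousMap_unitInterval_eqOn_zero_one hUc hK (subset_compl_iff_disjoint_right.1 hUK)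
  exact ⟨f, mem_of_superset hU hf₀, hf₁⟩

theorem Set.Icc.convexComb_eq_zero_iff {x y s : I} (h : x = 0 ↔ y = 0) :
    Icc.convexComb x y s = 0 ↔ y = 0 := by
  refine ⟨fun hc => ?_, fun hy => by simp [hy, h.mpr hy]⟩
  by_contra hy
  have hx : (0 : ℝ) < x := unitInterval.pos_iff_ne_zero.mpr (mt h.mp hy)
  have hy : (0 : ℝ) < y := unitInterval.pos_iff_ne_zero.mpr hy
  have hc : (1 - s : ℝ) * x + s * y = 0 := congrArg Subtype.val hc
  have := convex_Ioi (0 : ℝ) hx hy (sub_nonneg.2 s.2.2) s.2.1 (sub_add_cancel 1 _)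
  simp only [smul_eq_mul, mem_Ioi, hc, lt_self_iff_false] at this

theorem Set.Icc.convexComb_eq_one_iff {x y s : I} (h : x = 1 ↔ y = 1) :
    Icc.convexComb x y s = 1 ↔ y = 1 := by
  refine ⟨fun hc => ?_, fun hy => by simp [hy, h.mpr hy]⟩
  by_contra hy
  have hx : (x : ℝ) < 1 := unitInterval.lt_one_iff_ne_one.mpr (mt h.mp hy)
  have hy : (y : ℝ) < 1 := unitInterval.lt_one_iff_ne_one.mpr hy
  have hc : (1 - s : ℝ) * x + s * y = 1 := congrArg Subtype.val hc
  have := convex_Iio (1 : ℝ) hx hy (sub_nonneg.2 s.2.2) s.2.1 (sub_add_cancel 1 _)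
  simp only [smul_eq_mul, mem_Iio, hc, lt_self_iff_false] at this

section RestrictHomotopy

variable {Y : Type*} [TopologicalSpace Y] {P : Y → Prop} (H : C(I × Y, Y))
  (hH : ∀ s y, P y → P (H (s, y)))

def ContinuousMap.restrictAt (s : I) : C(Subtype P, Subtype P) :=
  ⟨fun y => ⟨H (s, y), hH s y y.2⟩, by fun_prop⟩

theorem ContinuousMap.homotopic_restrictAt :
    (H.restrictAt hH 0).Homotopic (H.restrictAt hH 1) :=
  ⟨{ toFun := fun p => ⟨H (p.1, p.2), hH p.1 p.2 p.2.2⟩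
     continuous_toFun := by fun_prop
     map_zero_left := fun _ => rfl
     map_one_left := fun _ => rfl }⟩

end RestrictHomotopy

namespace Concordance

variable {M : Type*} [TopologicalSpace M]

def IsNeat (f : C(I, M × JJ × I)) : Prop :=
  ∀ t, ((f t).2.2 = 0 ↔ t = 0) ∧ ((f t).2.2 = 1 ↔ t = 1)

def StartsStraight (star : M) (f : C(I, M × JJ × I)) : Prop :=
  ∀ᶠ t in 𝓝 0, f t = (star, jzero, t)

def LeftIfAligned (p q : M × JJ × I) : Prop :=
  p.1 = q.1 → p.2.2 = q.2.2 → (p.2.1 : ℝ) < q.2.1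

def Admissible (star : M) (t₁ t₂ : I) (f : C(I, M × JJ × I)) : Prop :=
  IsNeat f ∧ StartsStraight star f ∧ LeftIfAligned (f t₁) (f t₂)

def standardArc (star : M) : C(I, M × JJ × I) :=
  ⟨fun t => (star, jzero, t), by fun_prop⟩

theorem admissible_standardArc (star : M) {t₁ t₂ : I} (h : t₁ ≠ t₂) :
    Admissible star t₁ t₂ (standardArc star) :=
  ⟨fun _ => ⟨Iff.rfl, Iff.rfl⟩, .of_forall fun _ => rfl, fun _ hr => absurd hr h⟩

theorem ne_and_not_dirRight_iff {M : Type} {p q : M × JJ × I} :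
    p ≠ q ∧ ¬ DirRight p q ↔ LeftIfAligned p q := by
  obtain ⟨m, j, r⟩ := p
  obtain ⟨m', j', r'⟩ := q
  simp only [DirRight, LeftIfAligned, ne_eq, Prod.mk.injEq, not_and, not_lt]
  refine ⟨fun ⟨hne, hdir⟩ hm hr => (hdir hm hr).lt_of_ne fun hj => hne hm (Subtype.ext hj) hr,
    fun h => ⟨fun hm hj hr => (h hm hr).ne (congrArg Subtype.val hj), fun hm hr => (h hm hr).le⟩⟩

theorem dirLeft_iff_dirRight {M : Type} {p q : M × JJ × I} : DirLeft p q ↔ DirRight q p :=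
  ⟨fun ⟨hm, hr, hj⟩ => ⟨hm.symm, hr.symm, hj⟩, fun ⟨hm, hr, hj⟩ => ⟨hm.symm, hr.symm, hj⟩⟩

theorem eCond_and_not_dirRight_iff {M : Type} [TopologicalSpace M] {star : M} {t₁ t₂ : I}
    {f : C(I, M × JJ × I)} :
    ECond star t₁ t₂ f ∧ ¬ DirRight (f t₁) (f t₂) ↔ Admissible star t₁ t₂ f := by
  rw [ECond, Admissible, StartsStraight, ← ne_and_not_dirRight_iff, eventually_iff_exists_mem]
  simp only [and_assoc, IsNeat]

theorem eCond_and_not_dirLeft_iff {M : Type} [TopologicalSpace M] {star : M} {t₁ t₂ : I}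
    {f : C(I, M × JJ × I)} :
    ECond star t₁ t₂ f ∧ ¬ DirLeft (f t₁) (f t₂) ↔ Admissible star t₂ t₁ f := by
  rw [ECond, Admissible, StartsStraight, ← ne_and_not_dirRight_iff, eventually_iff_exists_mem,
    dirLeft_iff_dirRight, ne_comm]
  simp only [and_assoc, IsNeat]

def pullApart (w : C(I, I)) (τ : C(I, JJ)) : C(I × C(I, M × JJ × I), C(I, M × JJ × I)) :=
  ContinuousMap.curry
    ⟨fun q => ((q.1.2 q.2).1, Icc.convexComb (q.1.2 q.2).2.1 (τ q.2) (q.1.1 * w q.2),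
      (q.1.2 q.2).2.2), by fun_prop⟩

def straighten : C(I × C(I, M × JJ × I), C(I, M × JJ × I)) :=
  ContinuousMap.curry
    ⟨fun q => ((q.1.2 q.2).1, (q.1.2 q.2).2.1, Icc.convexComb (q.1.2 q.2).2.2 q.2 q.1.1),
      by fun_prop⟩

def shrink : C(I × C(I, M × JJ × I), C(I, M × JJ × I)) :=
  ContinuousMap.curry
    ⟨fun q => ((q.1.2 (σ q.1.1 * q.2)).1, (q.1.2 (σ q.1.1 * q.2)).2.1, q.2), by fun_prop⟩

@[simp]
theorem pullApart_apply (w : C(I, I)) (τ : C(I, JJ)) (s : I) (f : C(I, M × JJ × I)) (t : I) :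
    pullApart w τ (s, f) t = ((f t).1, Icc.convexComb (f t).2.1 (τ t) (s * w t), (f t).2.2) :=
  rfl

@[simp]
theorem straighten_apply (s : I) (f : C(I, M × JJ × I)) (t : I) :
    straighten (s, f) t = ((f t).1, (f t).2.1, Icc.convexComb (f t).2.2 t s) :=
  rfl

@[simp]
theorem shrink_apply (s : I) (f : C(I, M × JJ × I)) (t : I) :
    shrink (s, f) t = ((f (σ s * t)).1, (f (σ s * t)).2.1, t) :=
  rfl

variable {star : M} {t₁ t₂ : I} {f g : C(I, M × JJ × I)}

theorem straighten_zero (f : C(I, M × JJ × I)) : straighten (0, f) = f := by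
  ext t <;> simp

theorem straighten_one (f : C(I, M × JJ × I)) : straighten (1, f) = shrink (0, f) := by
  ext t <;> simp

theorem admissible_straighten (hneat : IsNeat g) (hstart : StartsStraight star g)
    (hj : ((g t₁).2.1 : ℝ) < (g t₂).2.1) (s : I) :
    Admissible star t₁ t₂ (straighten (s, g)) := by
  refine ⟨fun t => ?_, ?_, fun _ _ => hj⟩
  · exact ⟨Icc.convexComb_eq_zero_iff (hneat t).1, Icc.convexComb_eq_one_iff (hneat t).2⟩
  · filter_upwards [hstart] with t ht
    simp [ht]

theorem shrink_one (hg : g 0 = (star, jzero, 0)) : shrink (1, g) = standardArc star := by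
  ext t <;> simp [hg, standardArc]

theorem admissible_shrink (hstart : StartsStraight star g) (h : t₁ ≠ t₂) (s : I) :
    Admissible star t₁ t₂ (shrink (s, g)) := by
  refine ⟨fun _ => ⟨Iff.rfl, Iff.rfl⟩, ?_, fun _ hr => absurd hr h⟩
  have : Tendsto (σ s * ·) (𝓝 0) (𝓝 0) := (continuous_const_mul (σ s)).tendsto' 0 0 (mul_zero _)
  filter_upwards [this.eventually hstart] with t ht
  simp [ht]

section PullApart

variable {w : C(I, I)} {τ : C(I, JJ)}

theorem pullApart_zero (f : C(I, M × JJ × I)) : pullApart w τ (0, f) = f := by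
  ext t <;> simp

theorem pullApart_one_apply_of_eq_one {t : I} (h : w t = 1) :
    (pullApart w τ (1, f) t).2.1 = τ t := by
  simp [h]

theorem admissible_pullApart (hw₀ : ∀ᶠ t in 𝓝 0, w t = 0) (hw₁ : w t₁ = 1) (hw₂ : w t₂ = 1)
    (hτ : (τ t₁ : ℝ) < τ t₂) (hf : Admissible star t₁ t₂ f) (s : I) :
    Admissible star t₁ t₂ (pullApart w τ (s, f)) := by
  obtain ⟨hneat, hstart, hleft⟩ := hf
  refine ⟨hneat, ?_, fun hm hr => ?_⟩
  · filter_upwards [hw₀, hstart] with t hwt hft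
    simp [hwt, hft]
  · simp only [pullApart_apply, hw₁, hw₂, mul_one, Icc.coe_convexComb] at hm hr ⊢
    have := convex_Iio (0 : ℝ) (sub_neg.2 (hleft hm hr)) (sub_neg.2 hτ) (sub_nonneg.2 s.2.2) s.2.1
      (sub_add_cancel 1 _)
    simp only [smul_eq_mul, mem_Iio] at this
    linarith

theorem admissible_straighten_pullApart (hw₀ : ∀ᶠ t in 𝓝 0, w t = 0) (hw₁ : w t₁ = 1)
    (hw₂ : w t₂ = 1) (hτ : (τ t₁ : ℝ) < τ t₂) (hf : Admissible star t₁ t₂ f) (s : I) :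
    Admissible star t₁ t₂ (straighten (s, pullApart w τ (1, f))) := by
  obtain ⟨hneat, hstart, -⟩ := admissible_pullApart hw₀ hw₁ hw₂ hτ hf 1
  refine admissible_straighten hneat hstart ?_ s
  rwa [pullApart_one_apply_of_eq_one hw₁, pullApart_one_apply_of_eq_one hw₂]

end PullApart

theorem exists_continuousMap_lt {X : Type*} [TopologicalSpace X] [NormalSpace X] [T1Space X]
    {x y : X} (h : x ≠ y) : ∃ τ : C(X, JJ), (τ x : ℝ) < τ y := by
  obtain ⟨u, hux, huy⟩ := exists_continuousMap_unitInterval_eqOn_zero_one isClosed_singleton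
    isClosed_singleton (disjoint_singleton.2 h)
  refine ⟨⟨fun t => ⟨u t, by linarith [(u t).2.1], (u t).2.2⟩, by fun_prop⟩, ?_⟩
  simp [hux rfl, huy rfl]

theorem contractibleSpace_admissible (star : M) (h₁ : 0 < t₁) (h₂ : 0 < t₂) (h : t₁ ≠ t₂) :
    ContractibleSpace {f : C(I, M × JJ × I) // Admissible star t₁ t₂ f} := by
  obtain ⟨w, hw₀, hw⟩ := exists_continuousMap_unitInterval_eventually_zero (x := (0 : I))
    (K := {t₁, t₂}) (toFinite _).isClosed (by simp [h₁.ne, h₂.ne])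
  obtain ⟨τ, hτ⟩ := exists_continuousMap_lt h
  have hw₁ : w t₁ = 1 := hw (by simp)
  have hw₂ : w t₂ = 1 := hw (by simp)
  have hA : ∀ s f, Admissible star t₁ t₂ f → Admissible star t₁ t₂ (pullApart w τ (s, f)) :=
    fun s _ hf => admissible_pullApart hw₀ hw₁ hw₂ hτ hf s
  have hB : ∀ s f, Admissible star t₁ t₂ f →
      Admissible star t₁ t₂ (straighten (s, pullApart w τ (1, f))) :=
    fun s _ hf => admissible_straighten_pullApart hw₀ hw₁ hw₂ hτ hf s
  have hC : ∀ s f, Admissible star t₁ t₂ f →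
      Admissible star t₁ t₂ (shrink (s, pullApart w τ (1, f))) :=
    fun s f hf => admissible_shrink (hA 1 f hf).2.1 h s
  let pulled := (ContinuousMap.id I).prodMap ((pullApart (M := M) w τ).curry 1)
  have e₀ : ContinuousMap.id _ = (pullApart w τ).restrictAt hA 0 :=
    ContinuousMap.ext fun f => Subtype.ext (pullApart_zero f.1).symm
  have e₁ : (pullApart w τ).restrictAt hA 1 = (straighten.comp pulled).restrictAt hB 0 :=
    ContinuousMap.ext fun f => Subtype.ext (straighten_zero _).symm
  have e₂ : (straighten.comp pulled).restrictAt hB 1 = (shrink.comp pulled).restrictAt hC 0 :=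
    ContinuousMap.ext fun f => Subtype.ext (straighten_one _)
  have e₃ : (shrink.comp pulled).restrictAt hC 1 =
      ContinuousMap.const _ ⟨standardArc star, admissible_standardArc star h⟩ :=
    ContinuousMap.ext fun f => Subtype.ext (shrink_one (hA 1 f f.2).2.1.self_of_nhds)
  have h₁ := (pullApart w τ).homotopic_restrictAt hA
  have h₂ := e₁ ▸ (straighten.comp pulled).homotopic_restrictAt hB
  have h₃ := e₃ ▸ e₂ ▸ (shrink.comp pulled).homotopic_restrictAt hC
  rw [contractible_iff_id_nullhomotopic, e₀]
  exact ⟨_, (h₁.trans h₂).trans h₃⟩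

end Concordance

theorem contractibleSpace_subtype_congr {X : Type*} [TopologicalSpace X] {p q : X → Prop}
    (h : ∀ x, p x ↔ q x) : ContractibleSpace {x // p x} ↔ ContractibleSpace {x // q x} :=
  ((Homeomorph.refl X).subtype h).contractibleSpace_iff

theorem statement9_general {M : Type} [TopologicalSpace M] (star : M) (t₁ t₂ : ↥I)
    (h0 : (0:ℝ) < (t₁ : ℝ)) (h12 : (t₁ : ℝ) < (t₂ : ℝ)) :
    ContractibleSpace
      {f : C(↥I, M × ↥JJ × ↥I) // ECond star t₁ t₂ f ∧ ¬ DirRight (f t₁) (f t₂)} ∧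
    ContractibleSpace
      {f : C(↥I, M × ↥JJ × ↥I) // ECond star t₁ t₂ f ∧ ¬ DirLeft (f t₁) (f t₂)} := by
  have h₁ : 0 < t₁ := h0
  have h₂ : 0 < t₂ := h₁.trans h12
  have h : t₁ ≠ t₂ := ne_of_lt h12
  exact ⟨(contractibleSpace_subtype_congr fun _ => Concordance.eCond_and_not_dirRight_iff).2
      (Concordance.contractibleSpace_admissible star h₁ h₂ h),
    (contractibleSpace_subtype_congr fun _ => Concordance.eCond_and_not_dirLeft_iff).2
      (Concordance.contractibleSpace_admissible star h₂ h₁ h.symm)⟩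

theorem statement9 {M : Type} [TopologicalSpace M] (star : M) (t₁ t₂ : ↥I)
    (h0 : (0:ℝ) < (t₁ : ℝ)) (h12 : (t₁ : ℝ) < (t₂ : ℝ)) (h1 : (t₂ : ℝ) < 1) :
    ContractibleSpace
      {f : C(↥I, M × ↥JJ × ↥I) // ECond star t₁ t₂ f ∧ ¬ DirRight (f t₁) (f t₂)} ∧
    ContractibleSpace
      {f : C(↥I, M × ↥JJ × ↥I) // ECond star t₁ t₂ f ∧ ¬ DirLeft (f t₁) (f t₂)} :=
  statement9_general star t₁ t₂ h0 h12
end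
end
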